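/- For θ > 0 and 1 ≤ m ≤ n fixed, as α → 0+ the quantity q_α(n:m) = C(n,m)·[α]_m·[θ]_{n-m}/([α+θ]_n - [θ]_n) converges to (n!/(n-m)!)·([θ]_{n-m}/[θ]_n)·1/(m·h_θ(n)), where h_θ(n) = ∑_{k=1}^n 1/(θ+k-1). -/

import Mathlib

/-!
Both numerator and denominator vanish at `α = 0`, so divide each by `α`. Since
`[α]_m = α · [α + 1]_{m-1}`, the numerator over `α` tends to `C(n,m) (m-1)! [θ]_{n-m}`; the
denominator over `α` is a difference quotient of `x ↦ [x]_n` at `θ`, whose logarithmic derivative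
is `h_θ(n)`, so it tends to `[θ]_n h_θ(n)`. Finally `C(n,m) (m-1)! = n! / ((n-m)! m)`.
-/

noncomputable def risingFact (x : ℝ) (k : ℕ) : ℝ := ∏ i ∈ Finset.range k, (x + i)

noncomputable def genHarmonic (θ : ℝ) (k : ℕ) : ℝ := ∑ i ∈ Finset.range k, 1 / (θ + i)

open Filter Topology Nat

lemma risingFact_succ_right (x : ℝ) (k : ℕ) : risingFact x (k + 1) = risingFact x k * (x + k) :=
  Finset.prod_range_succ _ _

lemma risingFact_succ_left (x : ℝ) (k : ℕ) : risingFact x (k + 1) = x * risingFact (x + 1) k := by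
  simp only [risingFact, Finset.prod_range_succ', Nat.cast_add, Nat.cast_one, Nat.cast_zero,
    add_zero, add_assoc, add_comm (1 : ℝ), mul_comm]

lemma risingFact_one (k : ℕ) : risingFact 1 k = k ! := by
  rw [risingFact, ← Finset.prod_range_add_one_eq_factorial]
  push_cast
  simp only [add_comm]

lemma risingFact_pos {x : ℝ} (hx : 0 < x) (k : ℕ) : 0 < risingFact x k :=
  Finset.prod_pos fun _ _ => by positivity

lemma continuous_risingFact (k : ℕ) : Continuous (risingFact · k) :=
  continuous_finsetProd _ fun _ _ => continuous_id.add continuous_const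

lemma genHarmonic_succ (x : ℝ) (k : ℕ) : genHarmonic x (k + 1) = genHarmonic x k + 1 / (x + k) :=
  Finset.sum_range_succ _ _

lemma genHarmonic_pos {x : ℝ} (hx : 0 < x) {k : ℕ} (hk : k ≠ 0) : 0 < genHarmonic x k :=
  Finset.sum_pos (fun _ _ => by positivity) (Finset.nonempty_range_iff.mpr hk)

lemma hasDerivAt_risingFact {x : ℝ} {k : ℕ} (hx : ∀ i < k, x + i ≠ 0) :
    HasDerivAt (risingFact · k) (risingFact x k * genHarmonic x k) x := by
  induction k with
  | zero => simpa [risingFact, genHarmonic] using hasDerivAt_const x (1 : ℝ)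
  | succ k ih =>
    have hk : x + k ≠ 0 := hx k k.lt_succ_self
    have hprod := (ih fun i hi => hx i (by omega)).fun_mul ((hasDerivAt_id' x).add_const (k : ℝ))
    simp only [risingFact_succ_right]
    refine hprod.congr_deriv ?_
    rw [genHarmonic_succ]
    field_simp

lemma tendsto_risingFact_succ_div_self (k : ℕ) :
    Tendsto (fun α => risingFact α (k + 1) / α) (𝓝[≠] 0) (𝓝 (k ! : ℝ)) := by
  have hcont : Tendsto (fun α => risingFact (α + 1) k) (𝓝 0) (𝓝 (k ! : ℝ)) :=
    ((continuous_risingFact k).comp (continuous_add_const 1)).tendsto' 0 _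
      (by simp [risingFact_one])
  refine (hcont.mono_left nhdsWithin_le_nhds).congr' ?_
  filter_upwards [self_mem_nhdsWithin] with α hα
  rw [risingFact_succ_left, mul_div_cancel_left₀ _ hα]

lemma tendsto_risingFact_slope {x : ℝ} {k : ℕ} (hx : ∀ i < k, x + i ≠ 0) :
    Tendsto (fun α => (risingFact (α + x) k - risingFact x k) / α) (𝓝[≠] 0)
      (𝓝 (risingFact x k * genHarmonic x k)) := by
  simpa [add_comm, div_eq_inv_mul] using
    hasDerivAt_iff_tendsto_slope_zero.mp (hasDerivAt_risingFact hx)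

lemma choose_succ_mul_factorial {n k : ℕ} (hk : k + 1 ≤ n) :
    (n.choose (k + 1) : ℝ) * k ! = n ! / (n - (k + 1))! / (k + 1 : ℕ) := by
  have h := Nat.choose_mul_factorial_mul_factorial hk
  rw [Nat.factorial_succ] at h
  rw [eq_div_iff (by positivity), eq_div_iff (by positivity), ← h]
  push_cast
  ring

theorem q_alpha_limit (θ : ℝ) (hθ : 0 < θ) (n m : ℕ) (hm : 1 ≤ m) (hmn : m ≤ n) :
    Filter.Tendsto
      (fun α : ℝ =>
        (n.choose m : ℝ) * risingFact α m * risingFact θ (n - m) /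
          (risingFact (α + θ) n - risingFact θ n))
      (nhdsWithin 0 (Set.Ioi 0))
      (nhds (((n.factorial : ℝ) / ((n - m).factorial : ℝ)) *
        (risingFact θ (n - m) / risingFact θ n) * (1 / ((m : ℝ) * genHarmonic θ n)))) := by
  obtain ⟨k, rfl⟩ : ∃ k, m = k + 1 := ⟨m - 1, by omega⟩
  have hderiv : risingFact θ n * genHarmonic θ n ≠ 0 :=
    (mul_pos (risingFact_pos hθ n) (genHarmonic_pos hθ (by omega))).ne'
  have hlim := (((tendsto_const_nhds (x := (n.choose (k + 1) : ℝ))).mul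
    (tendsto_risingFact_succ_div_self k)).mul
    (tendsto_const_nhds (x := risingFact θ (n - (k + 1))))).div
    (tendsto_risingFact_slope fun i _ => by positivity) hderiv
  have hvalue : (n.choose (k + 1) : ℝ) * k ! * risingFact θ (n - (k + 1)) /
      (risingFact θ n * genHarmonic θ n) = (n ! / (n - (k + 1))! : ℝ) *
        (risingFact θ (n - (k + 1)) / risingFact θ n) * (1 / ((k + 1 : ℕ) * genHarmonic θ n)) := by
    rw [choose_succ_mul_factorial hmn]
    field_simp
  rw [← hvalue]
  refine (hlim.mono_left (nhdsWithin_mono _ fun α (hα : 0 < α) => hα.ne')).congr' ?_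
  filter_upwards [self_mem_nhdsWithin] with α (hα : 0 < α)
  rw [Pi.div_apply]
  field_simp
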